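/- Proximity in trace distance implies proximity of absolute traces: for all 2×2 complex unitary matrices U and V and every ε > 0, if sqrt((2 − |tr(U·V†)|)/2) < ε then | |tr(U)| − |tr(V)| | < 4ε. -/

import Mathlib

open Matrix Complex

noncomputable section

/-- The Hadamard gate. -/
noncomputable def Hm : Matrix (Fin 2) (Fin 2) ℂ :=
  (Complex.I / (Real.sqrt 2 : ℂ)) • !![1, 1; 1, -1]

/-- The T gate. -/
noncomputable def Tm : Matrix (Fin 2) (Fin 2) ℂ :=
  !![Complex.exp (-(Real.pi / 8 : ℂ) * Complex.I), 0;
     0, Complex.exp ((Real.pi / 8 : ℂ) * Complex.I)]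

/-- The phase gate `S = T²`. -/
noncomputable def Sm : Matrix (Fin 2) (Fin 2) ℂ := Tm * Tm

/-- `A` equals `B` up to a unit-modulus scalar (global phase). -/
def UpToPhase (A B : Matrix (Fin 2) (Fin 2) ℂ) : Prop :=
  ∃ z : ℂ, ‖z‖ = 1 ∧ A = z • B

/-- Evaluation of a word over the alphabet {H, S}. -/
noncomputable def evalHS (w : List Bool) : Matrix (Fin 2) (Fin 2) ℂ :=
  (w.map (fun b => if b then Hm else Sm)).prod

/-- The Clifford group 𝒞: unitaries equal up to phase to a product of copies of H and S. -/
def Clifford (U : Matrix (Fin 2) (Fin 2) ℂ) : Prop :=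
  U ∈ Matrix.unitaryGroup (Fin 2) ℂ ∧ ∃ w : List Bool, UpToPhase U (evalHS w)

/-- The syllables TH and SH. -/
inductive Syl : Type
  | TH : Syl
  | SH : Syl
deriving DecidableEq

/-- Evaluation of a syllable. -/
noncomputable def evalSyl : Syl → Matrix (Fin 2) (Fin 2) ℂ
  | Syl.TH => Tm * Hm
  | Syl.SH => Sm * Hm

/-- Evaluation of a word over {TH, SH}. -/
noncomputable def evalWord (w : List Syl) : Matrix (Fin 2) (Fin 2) ℂ :=
  (w.map evalSyl).prod

/-- A word is normalized if it is empty, or it ends with TH and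
contains no two consecutive SH syllables. -/
def Normalized (w : List Syl) : Prop :=
  w = [] ∨ (w.getLast? = some Syl.TH ∧ ¬ ([Syl.SH, Syl.SH] <:+: w))

/-- A canonical word: normalized and no SH among its first four syllables. -/
def Canonical (w : List Syl) : Prop :=
  Normalized w ∧ Syl.SH ∉ w.take 4

/-- The T-count of a word: the number of TH syllables. -/
def Tcount (w : List Syl) : ℕ := w.count Syl.TH

/-- Trace distance between two matrices. -/
noncomputable def udist (U V : Matrix (Fin 2) (Fin 2) ℂ) : ℝ :=
  Real.sqrt ((2 - ‖(U * Vᴴ).trace‖) / 2)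

theorem trace_proximity
    (U V : Matrix (Fin 2) (Fin 2) ℂ)
    (hU : U ∈ Matrix.unitaryGroup (Fin 2) ℂ) (hV : V ∈ Matrix.unitaryGroup (Fin 2) ℂ)
    (ε : ℝ) (hε : 0 < ε) (h : udist U V < ε) :
    |‖U.trace‖ - ‖V.trace‖| < 4 * ε := by
  classical
  have hUU : U * Uᴴ = 1 := (Matrix.mem_unitaryGroup_iff.mp hU)
  have hVV : V * Vᴴ = 1 := (Matrix.mem_unitaryGroup_iff.mp hV)
  set T : ℂ := (U * Vᴴ).trace with hTdef
  set t : ℝ := ‖T‖ with htdef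
  have ht0 : 0 ≤ t := norm_nonneg T
  have h1 : (2 - t) / 2 < ε ^ 2 := by
    have := (Real.sqrt_lt' hε).mp h
    simpa [udist] using this
  -- choose a phase z with conj z * T = t
  obtain ⟨z, hz1, hzT⟩ : ∃ z : ℂ, ‖z‖ = 1 ∧ (starRingEnd ℂ) z * T = (t : ℂ) := by
    by_cases hT : T = 0
    · exact ⟨1, by simp, by simp [hT, htdef]⟩
    · have htne : (t : ℝ) ≠ 0 := by simpa [htdef] using (norm_ne_zero_iff.mpr hT)
      refine ⟨T / (t : ℂ), ?_, ?_⟩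
      · rw [norm_div]
        simp [htdef, Complex.norm_real, _root_.abs_of_nonneg ht0, htne, hT]
      · rw [map_div₀]
        simp only [Complex.conj_ofReal]
        rw [div_mul_eq_mul_div, ← Complex.normSq_eq_conj_mul_self, ← Complex.sq_norm]
        rw [htdef]
        rw [sq]
        push_cast
        rw [mul_div_assoc, div_self (by exact_mod_cast htne), mul_one]
  set A : Matrix (Fin 2) (Fin 2) ℂ := U - z • V with hAdef
  have trace_form : ∀ (P Q : Matrix (Fin 2) (Fin 2) ℂ),
      (P * Qᴴ).trace = ∑ i : Fin 2, ∑ j : Fin 2, P i j * (starRingEnd ℂ) (Q i j) := by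
    intro P Q
    simp [Matrix.trace, Matrix.diag, Matrix.mul_apply, Matrix.conjTranspose_apply]
  have hsU : ∑ i : Fin 2, ∑ j : Fin 2, Complex.normSq (U i j) = 2 := by
    have h2 : (U * Uᴴ).trace = 2 := by rw [hUU]; simp [Matrix.trace_one]
    rw [trace_form] at h2
    simp only [Complex.mul_conj] at h2
    exact_mod_cast h2
  have hsV : ∑ i : Fin 2, ∑ j : Fin 2, Complex.normSq (V i j) = 2 := by
    have h2 : (V * Vᴴ).trace = 2 := by rw [hVV]; simp [Matrix.trace_one]
    rw [trace_form] at h2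
    simp only [Complex.mul_conj] at h2
    exact_mod_cast h2
  have hcross : ∑ i : Fin 2, ∑ j : Fin 2, (U i j * (starRingEnd ℂ) (z * V i j)).re = t := by
    have hsum : ∑ i : Fin 2, ∑ j : Fin 2, U i j * (starRingEnd ℂ) (z * V i j)
        = (starRingEnd ℂ) z * T := by
      rw [hTdef, trace_form]
      rw [Finset.mul_sum]
      refine Finset.sum_congr rfl fun i _ => ?_
      rw [Finset.mul_sum]
      refine Finset.sum_congr rfl fun j _ => ?_
      rw [_root_.map_mul]
      ring
    have : (∑ i : Fin 2, ∑ j : Fin 2, U i j * (starRingEnd ℂ) (z * V i j)).re = t := by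
      rw [hsum, hzT]; simp
    rw [← this, Complex.re_sum]
    exact Finset.sum_congr rfl fun i _ => (Complex.re_sum _ _).symm
  have hA : ∀ i j, A i j = U i j - z * V i j := by
    intro i j; simp [hAdef, Matrix.sub_apply, Matrix.smul_apply, smul_eq_mul]
  have hnz : Complex.normSq z = 1 := by
    rw [← Complex.sq_norm, hz1]; norm_num
  have hsumA : ∑ i : Fin 2, ∑ j : Fin 2, Complex.normSq (A i j) = 4 - 2 * t := by
    have expand : ∀ i j, Complex.normSq (A i j)
        = Complex.normSq (U i j) + Complex.normSq (V i j)
          - 2 * (U i j * (starRingEnd ℂ) (z * V i j)).re := by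
      intro i j
      rw [hA i j, Complex.normSq_sub, Complex.normSq_mul, hnz]
      ring
    simp only [Fin.sum_univ_two] at hsU hsV hcross ⊢
    simp only [expand]
    linarith
  have hdiag : Complex.normSq (A 0 0) + Complex.normSq (A 1 1) ≤ 4 - 2 * t := by
    rw [← hsumA]
    simp only [Fin.sum_univ_two]
    nlinarith [Complex.normSq_nonneg (A 0 1), Complex.normSq_nonneg (A 1 0)]
  have htrA : A.trace = A 0 0 + A 1 1 := by
    simp [Matrix.trace, Fin.sum_univ_two]
  have habsA : ‖A.trace‖ ^ 2 ≤ 2 * (4 - 2 * t) := by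
    have h1' : ‖A.trace‖ ≤ ‖A 0 0‖ + ‖A 1 1‖ := by
      rw [htrA]; exact norm_add_le _ _
    have h2' : ‖A 0 0‖ ^ 2 = Complex.normSq (A 0 0) := Complex.sq_norm _
    have h3' : ‖A 1 1‖ ^ 2 = Complex.normSq (A 1 1) := Complex.sq_norm _
    nlinarith [norm_nonneg A.trace, norm_nonneg (A 0 0),
      norm_nonneg (A 1 1), hdiag, h1',
      sq_nonneg (‖A 0 0‖ - ‖A 1 1‖)]
  have hlt : ‖A.trace‖ < 4 * ε := by
    have hsq : ‖A.trace‖ ^ 2 < (4 * ε) ^ 2 := by nlinarith [sq_nonneg ε]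
    nlinarith [norm_nonneg A.trace]
  have htr : A.trace = U.trace - z * V.trace := by
    simp [hAdef, Matrix.trace_sub, Matrix.trace_smul, smul_eq_mul]
  have hfin : |‖U.trace‖ - ‖z * V.trace‖|
      ≤ ‖U.trace - z * V.trace‖ :=
    abs_norm_sub_norm_le _ _
  have hzv : ‖z * V.trace‖ = ‖V.trace‖ := by
    rw [norm_mul, hz1, one_mul]
  rw [hzv] at hfin
  rw [← htr] at hfin
  linarith


end
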